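/- Spectral folding maps the bandlimited basis to the high-frequency basis: assume the (M,Q)-GFT with Q = diag(M_SS, M_ScSc) has generalized eigenpairs (u_k, λ_k) with λ_1 ≤ ... ≤ λ_N and Uᵀ Q U = I, the eigenvalues are symmetric about 1, and λ_r < 1 ≤ λ_{r+1}. Then the vectors {J u_k : k ≤ r} span the same subspace as the eigenvectors with eigenvalues > 1, and the matrix V = [U_R, J U_R] (U_R the first r columns of U) satisfies Vᵀ Q V = I_{2r}. -/
import Mathlib


open Matrix

/-- The diagonal ±1 matrix: +1 on `S` (left summand), −1 on `Sᶜ` (right summand). -/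
def Jmat (s t : ℕ) : Matrix (Fin s ⊕ Fin t) (Fin s ⊕ Fin t) ℝ :=
  Matrix.fromBlocks 1 0 0 (-1)

/-- The block-diagonal inner product matrix `Q = diag(M_SS, M_ScSc)`. -/
def Qmat {s t : ℕ} (M : Matrix (Fin s ⊕ Fin t) (Fin s ⊕ Fin t) ℝ) :
    Matrix (Fin s ⊕ Fin t) (Fin s ⊕ Fin t) ℝ :=
  Matrix.fromBlocks M.toBlocks₁₁ 0 0 M.toBlocks₂₂

lemma Jmat_mul_Jmat (s t : ℕ) : Jmat s t * Jmat s t = 1 := by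
  simp [Jmat, Matrix.fromBlocks_multiply, ← Matrix.fromBlocks_one]

lemma Jmat_transpose (s t : ℕ) : (Jmat s t)ᵀ = Jmat s t := by
  simp [Jmat, Matrix.fromBlocks_transpose]

lemma Qmat_symm {s t : ℕ} (M : Matrix (Fin s ⊕ Fin t) (Fin s ⊕ Fin t) ℝ)
    (hM : Mᵀ = M) : (Qmat M)ᵀ = Qmat M := by
  ext i j
  cases i <;> cases j <;>
    simp [Qmat, Matrix.fromBlocks, Matrix.toBlocks₁₁, Matrix.toBlocks₂₂] <;>
    exact congrFun (congrFun hM _) _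

lemma Jmat_Qmat_Jmat {s t : ℕ} (M : Matrix (Fin s ⊕ Fin t) (Fin s ⊕ Fin t) ℝ) :
    Jmat s t * Qmat M * Jmat s t = Qmat M := by
  simp [Jmat, Qmat, Matrix.fromBlocks_multiply]

lemma conj_apply {I K : Type*} [Fintype I] (A : Matrix I K ℝ) (Q : Matrix I I ℝ) (k l : K) :
    (Aᵀ * Q * A) k l = (fun i => A i k) ⬝ᵥ (Q *ᵥ fun i => A i l) := by
  simp only [Matrix.mul_apply, Matrix.transpose_apply, dotProduct, Matrix.mulVec,
    Finset.sum_mul, Finset.mul_sum]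
  rw [Finset.sum_comm]
  exact Finset.sum_congr rfl fun i _ => Finset.sum_congr rfl fun j _ => by ring

/-- Spectral folding maps the bandlimited basis to the high-frequency basis:
`{J u_k : k ≤ r}` spans the same subspace as the eigenvectors with eigenvalues `> 1`,
and `V = [U_R, J U_R]` satisfies `Vᵀ Q V = I`. -/
theorem stmt_7 {s t : ℕ} (M : Matrix (Fin s ⊕ Fin t) (Fin s ⊕ Fin t) ℝ)
    (hM : M.PosSemidef) (hQ : (Qmat M).PosDef)
    (U : Matrix (Fin s ⊕ Fin t) (Fin (s + t)) ℝ) (lam : Fin (s + t) → ℝ)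
    (hmono : Monotone lam)
    (heig : ∀ k, M *ᵥ (fun i => U i k) = lam k • (Qmat M *ᵥ fun i => U i k))
    (horth : Uᵀ * Qmat M * U = 1)
    (hfold : ∀ (u : Fin s ⊕ Fin t → ℝ) (l : ℝ),
      M *ᵥ u = l • (Qmat M *ᵥ u) ↔
      M *ᵥ (Jmat s t *ᵥ u) = (2 - l) • (Qmat M *ᵥ (Jmat s t *ᵥ u)))
    (hsymm : ∀ k : Fin (s + t), lam k.rev = 2 - lam k)
    (r : ℕ) (hr : r ≤ s + t)
    (hlt : ∀ k : Fin (s + t), (k : ℕ) < r → lam k < 1)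
    (hge : ∀ k : Fin (s + t), r ≤ (k : ℕ) → 1 ≤ lam k) :
    (Submodule.span ℝ
        {v : Fin s ⊕ Fin t → ℝ | ∃ k : Fin (s + t), (k : ℕ) < r ∧
          v = Jmat s t *ᵥ (fun i => U i k)} =
      Submodule.span ℝ
        {v : Fin s ⊕ Fin t → ℝ | ∃ k : Fin (s + t), 1 < lam k ∧ v = fun i => U i k}) ∧
    (Matrix.of fun (i : Fin s ⊕ Fin t) (k : Fin r ⊕ Fin r) =>
        Sum.elim (fun a => U i (Fin.castLE hr a))
          (fun a => (Jmat s t *ᵥ fun j => U j (Fin.castLE hr a)) i) k)ᵀ *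
      Qmat M *
      (Matrix.of fun (i : Fin s ⊕ Fin t) (k : Fin r ⊕ Fin r) =>
        Sum.elim (fun a => U i (Fin.castLE hr a))
          (fun a => (Jmat s t *ᵥ fun j => U j (Fin.castLE hr a)) i) k) = 1 := by
  classical
  have hMs : Mᵀ = M := by
    ext i j; simpa using congrFun (congrFun hM.1 i) j
  have hQs : (Qmat M)ᵀ = Qmat M := Qmat_symm M hMs
  have hJJ : Jmat s t * Jmat s t = 1 := Jmat_mul_Jmat s t
  have hJinv : ∀ x : Fin s ⊕ Fin t → ℝ, Jmat s t *ᵥ (Jmat s t *ᵥ x) = x := by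
    intro x; rw [Matrix.mulVec_mulVec, hJJ, Matrix.one_mulVec]
  have hsymQ : ∀ x y : Fin s ⊕ Fin t → ℝ,
      x ⬝ᵥ (Qmat M *ᵥ y) = y ⬝ᵥ (Qmat M *ᵥ x) := by
    intro x y
    rw [Matrix.dotProduct_mulVec, ← Matrix.mulVec_transpose, hQs, dotProduct_comm]
  have key0 : ∀ k l : Fin (s + t),
      (fun i => U i k) ⬝ᵥ (Qmat M *ᵥ fun i => U i l) = if k = l then 1 else 0 := by
    intro k l
    rw [← conj_apply U (Qmat M) k l, horth, Matrix.one_apply]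
  have key1 : ∀ (k : Fin (s + t)) (v : Fin s ⊕ Fin t → ℝ) (l : ℝ),
      M *ᵥ v = l • (Qmat M *ᵥ v) → lam k ≠ l →
      (fun i => U i k) ⬝ᵥ (Qmat M *ᵥ v) = 0 := by
    intro k v l hv hne
    have h1 : (fun i => U i k) ⬝ᵥ (M *ᵥ v) = l * ((fun i => U i k) ⬝ᵥ (Qmat M *ᵥ v)) := by
      rw [hv, dotProduct_smul, smul_eq_mul]
    have h2 : (fun i => U i k) ⬝ᵥ (M *ᵥ v)
        = lam k * ((fun i => U i k) ⬝ᵥ (Qmat M *ᵥ v)) := by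
      rw [Matrix.dotProduct_mulVec, ← Matrix.mulVec_transpose, hMs, heig k,
        smul_dotProduct, smul_eq_mul]
      congr 1
      rw [dotProduct_comm, hsymQ]
    have h3 : (lam k - l) * ((fun i => U i k) ⬝ᵥ (Qmat M *ᵥ v)) = 0 := by
      rw [sub_mul, ← h2, ← h1, sub_self]
    rcases mul_eq_zero.mp h3 with h | h
    · exact absurd (sub_eq_zero.mp h) hne
    · exact h
  have hUU : U * (Uᵀ * Qmat M) = 1 := by
    rw [Matrix.mul_eq_one_comm_of_equiv finSumFinEquiv]
    exact horth
  have key2 : ∀ (v : Fin s ⊕ Fin t → ℝ) (l : ℝ), M *ᵥ v = l • (Qmat M *ᵥ v) →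
      v ∈ Submodule.span ℝ
        {w : Fin s ⊕ Fin t → ℝ | ∃ k : Fin (s + t), lam k = l ∧ w = fun i => U i k} := by
    intro v l hv
    have hvrep : v = ∑ k : Fin (s + t), ((Uᵀ * Qmat M) *ᵥ v) k • (fun i => U i k) := by
      ext i
      have h1 : v i = ((U * (Uᵀ * Qmat M)) *ᵥ v) i := by rw [hUU, Matrix.one_mulVec]
      rw [h1, ← Matrix.mulVec_mulVec]
      simp [Matrix.mulVec, dotProduct, Finset.sum_apply, mul_comm]
    rw [hvrep]
    refine Submodule.sum_mem _ fun k _ => ?_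
    by_cases hk : lam k = l
    · exact Submodule.smul_mem _ _ (Submodule.subset_span ⟨k, hk, rfl⟩)
    · have hc : ((Uᵀ * Qmat M) *ᵥ v) k = 0 := by
        have h4 : ((Uᵀ * Qmat M) *ᵥ v) k = (fun i => U i k) ⬝ᵥ (Qmat M *ᵥ v) := by
          simp only [Matrix.mulVec, dotProduct, Matrix.mul_apply, Matrix.transpose_apply,
            Finset.sum_mul, Finset.mul_sum]
          rw [Finset.sum_comm]
          exact Finset.sum_congr rfl fun i _ => Finset.sum_congr rfl fun j _ => by ring
        rw [h4]; exact key1 k v l hv hk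
      rw [hc, zero_smul]
      exact Submodule.zero_mem _
  constructor
  · apply le_antisymm
    · rw [Submodule.span_le]
      rintro w ⟨k, hk, rfl⟩
      have he := (hfold (fun i => U i k) (lam k)).mp (heig k)
      refine Submodule.span_mono ?_ (key2 _ _ he)
      rintro w ⟨j, hj, rfl⟩
      exact ⟨j, by rw [hj]; linarith [hlt k hk], rfl⟩
    · rw [Submodule.span_le]
      rintro w ⟨j, hj, rfl⟩
      have he := (hfold (fun i => U i j) (lam j)).mp (heig j)
      have hmem2 : (Jmat s t *ᵥ fun i => U i j) ∈ Submodule.span ℝ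
          {w : Fin s ⊕ Fin t → ℝ | ∃ k : Fin (s + t), (k : ℕ) < r ∧ w = fun i => U i k} := by
        refine Submodule.span_mono ?_ (key2 _ _ he)
        rintro w ⟨k, hk, rfl⟩
        refine ⟨k, ?_, rfl⟩
        by_contra h
        have := hge k (Nat.le_of_not_lt h)
        rw [hk] at this; linarith
      have hmap := Submodule.mem_map_of_mem (f := (Jmat s t).mulVecLin) hmem2
      rw [Submodule.map_span] at hmap
      have himg : (Jmat s t).mulVecLin ''
            {w : Fin s ⊕ Fin t → ℝ | ∃ k : Fin (s + t), (k : ℕ) < r ∧ w = fun i => U i k} ⊆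
          {v : Fin s ⊕ Fin t → ℝ | ∃ k : Fin (s + t), (k : ℕ) < r ∧
            v = Jmat s t *ᵥ fun i => U i k} := by
        rintro _ ⟨w, ⟨k, hk, rfl⟩, rfl⟩
        exact ⟨k, hk, by simp [Matrix.mulVecLin_apply]⟩
      have hfin := Submodule.span_mono himg hmap
      simpa [Matrix.mulVecLin_apply, hJinv] using hfin
  · ext k l
    rw [conj_apply]
    have hJform : ∀ x y : Fin s ⊕ Fin t → ℝ,
        (Jmat s t *ᵥ x) ⬝ᵥ (Qmat M *ᵥ (Jmat s t *ᵥ y)) = x ⬝ᵥ (Qmat M *ᵥ y) := by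
      intro x y
      rw [Matrix.mulVec_mulVec, Matrix.dotProduct_mulVec, Matrix.vecMul_mulVec,
        Jmat_transpose, ← Matrix.mul_assoc, Jmat_Qmat_Jmat, ← Matrix.dotProduct_mulVec]
    have hcast : ∀ a : Fin r, lam (Fin.castLE hr a) < 1 := fun a =>
      hlt _ (by simpa using a.isLt)
    cases k with
    | inl a =>
      cases l with
      | inl b =>
        simp only [Matrix.of_apply, Sum.elim_inl]
        rw [key0, Matrix.one_apply]
        simp [Fin.castLE_inj]
      | inr b =>
        simp only [Matrix.of_apply, Sum.elim_inl, Sum.elim_inr]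
        have he := (hfold (fun i => U i (Fin.castLE hr b)) (lam (Fin.castLE hr b))).mp
          (heig (Fin.castLE hr b))
        rw [key1 _ _ _ he (by have := hcast a; have := hcast b; intro h; linarith)]
        simp [Matrix.one_apply]
    | inr a =>
      cases l with
      | inl b =>
        simp only [Matrix.of_apply, Sum.elim_inl, Sum.elim_inr]
        rw [hsymQ]
        have he := (hfold (fun i => U i (Fin.castLE hr a)) (lam (Fin.castLE hr a))).mp
          (heig (Fin.castLE hr a))
        rw [key1 _ _ _ he (by have := hcast a; have := hcast b; intro h; linarith)]
        simp [Matrix.one_apply]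
      | inr b =>
        simp only [Matrix.of_apply, Sum.elim_inr]
        rw [hJform, key0, Matrix.one_apply]
        simp [Fin.castLE_inj]
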